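/- If q is a power of 2 and q - 1 is prime (a Mersenne prime) with q ≥ 5, then ex(q² - q - 2, C₄) ≥ (1/2)q³ - (1/2)q² - 3q + 3, which is strictly greater than (1/2)q³ - q². -/

import Mathlib

/-!
The Erdős–Rényi polarity graph `ER_p` joins two distinct points of the projective plane over
`𝔽_p` when they are orthogonal for a nondegenerate symmetric bilinear form. It is `C₄`-free because
two distinct points span a plane whose orthogonal complement is a single point. Every point has
`p + 1` orthogonal points, so its degree is `p + 1`, or `p` if it is self-orthogonal. For the form
`x₀y₂ - 2x₁y₁ + x₂y₀` (odd `p`) the self-orthogonal points are the `p + 1` points of the conic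
`x₀x₂ = x₁²`, so `ER_p` has `p(p + 1)²/2` edges. Deleting three conic points removes at most `3p`
edges and leaves `p² + p - 2 = q² - q - 2` vertices, where `q = p + 1`.
-/

open Finset Module
open LinearMap (BilinForm)
open scoped LinearAlgebra.Projectivization

namespace SimpleGraph

variable {V W : Type*}

def C4Free (G : SimpleGraph V) : Prop :=
  ∀ a b c d, G.Adj a b → G.Adj b c → G.Adj c d → G.Adj d a → a = c ∨ b = d

lemma C4Free.comap {G : SimpleGraph W} (hG : G.C4Free) {f : V → W} (hf : f.Injective) :
    (G.comap f).C4Free := fun _ _ _ _ hab hbc hcd hda =>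
  (hG _ _ _ _ hab hbc hcd hda).imp (fun h => hf h) (fun h => hf h)

lemma card_edgeFinset_le_card_edgeFinset_induce_add_sum_degree [Fintype V]
    (G : SimpleGraph V) [DecidableRel G.Adj] (s : Set V) [DecidablePred (· ∈ s)] :
    #G.edgeFinset ≤ #(G.induce s).edgeFinset + ∑ x ∈ sᶜ.toFinset, G.degree x := by
  classical
  have hcover : G.edgeFinset ⊆
      (G.edgeFinset ∩ s.toFinset.sym2) ∪ sᶜ.toFinset.biUnion (fun x => G.incidenceFinset x) := by
    intro e he
    induction e with | h a b =>
    have hab : G.Adj a b := mem_edgeFinset.1 he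
    by_cases ha : a ∈ s
    · by_cases hb : b ∈ s
      · exact mem_union_left _ (mem_inter.2 ⟨he, mk_mem_sym2_iff.2 (by simp [ha, hb])⟩)
      · exact mem_union_right _ (mem_biUnion.2 ⟨b, by simpa using hb,
          (G.mem_incidenceFinset _ _).2 ⟨hab, Sym2.mem_mk_right a b⟩⟩)
    · exact mem_union_right _ (mem_biUnion.2 ⟨a, by simpa using ha,
        (G.mem_incidenceFinset _ _).2 ⟨hab, Sym2.mem_mk_left a b⟩⟩)
  calc #G.edgeFinset
      ≤ #(G.edgeFinset ∩ s.toFinset.sym2) + #(sᶜ.toFinset.biUnion fun x => G.incidenceFinset x) :=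
        (card_le_card hcover).trans (card_union_le _ _)
    _ ≤ #(G.induce s).edgeFinset + ∑ x ∈ sᶜ.toFinset, G.degree x := by
        gcongr
        · rw [← map_edgeFinset_induce, card_map]
        · exact card_biUnion_le.trans_eq
            (sum_congr rfl fun x _ => G.card_incidenceFinset_eq_degree x)

end SimpleGraph

namespace Projectivization

variable {K V : Type*} [Field K] [AddCommGroup V] [Module K V]

lemma submodule_le_iff_rep_mem {x : ℙ K V} {W : Submodule K V} : x.submodule ≤ W ↔ x.rep ∈ W := by
  rw [submodule_eq, Submodule.span_singleton_le_iff_mem]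

lemma card_subtype_submodule_le (W : Submodule K V) :
    Nat.card {x : ℙ K V // x.submodule ≤ W} = Nat.card (ℙ K W) := by
  let ι := map W.subtype W.injective_subtype
  have hrange : Set.range ι = {x | x.submodule ≤ W} := by
    ext x
    constructor
    · rintro ⟨y, rfl⟩
      induction y using ind with | h v hv =>
      simp [ι, map_mk, submodule_mk]
    · intro hx
      refine ⟨mk K ⟨x.rep, submodule_le_iff_rep_mem.1 hx⟩ (by simpa using x.rep_nonzero), ?_⟩
      simp [ι, map_mk, mk_rep]
  rw [← Nat.card_range_of_injective (map_injective _ W.injective_subtype), hrange]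
  rfl

lemma card_of_finrank_three [Finite K] (h : finrank K V = 3) :
    Nat.card (ℙ K V) = Nat.card K ^ 2 + Nat.card K + 1 := by
  rw [card_of_finrank K V h]
  simp [sum_range_succ]
  ring

end Projectivization

namespace LinearMap.BilinForm

open Projectivization

variable {K V : Type*} [Field K] [AddCommGroup V] [Module K V] (B : BilinForm K V)

lemma orthogonal_sup (N L : Submodule K V) :
    B.orthogonal (N ⊔ L) = B.orthogonal N ⊓ B.orthogonal L := by
  refine le_antisymm (le_inf (orthogonal_le le_sup_left) (orthogonal_le le_sup_right)) ?_
  rintro m ⟨hN, hL⟩ n hn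
  obtain ⟨a, ha, b, hb, rfl⟩ := Submodule.mem_sup.1 hn
  rw [map_add, LinearMap.add_apply, hN a ha, hL b hb, add_zero]

lemma apply_rep_eq_zero_iff {x y : ℙ K V} :
    B x.rep y.rep = 0 ↔ y.submodule ≤ B.orthogonal x.submodule := by
  rw [submodule_le_iff_rep_mem, submodule_eq, mem_orthogonal_iff]
  refine ⟨fun h n hn => ?_, fun h => h _ (Submodule.mem_span_singleton_self _)⟩
  obtain ⟨a, rfl⟩ := Submodule.mem_span_singleton.1 hn
  rw [map_smul, LinearMap.smul_apply, h, smul_zero]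

lemma apply_rep_mk_eq_zero_iff {v w : V} (hv : v ≠ 0) (hw : w ≠ 0) :
    B (Projectivization.mk K v hv).rep (Projectivization.mk K w hw).rep = 0 ↔ B v w = 0 := by
  obtain ⟨a, ha⟩ := exists_smul_eq_mk_rep K v hv
  obtain ⟨b, hb⟩ := exists_smul_eq_mk_rep K w hw
  simp [← ha, ← hb, Units.smul_def]

def polarityGraph : SimpleGraph (ℙ K V) := SimpleGraph.fromRel fun x y => B x.rep y.rep = 0

variable {B}

lemma polarityGraph_adj (hrefl : B.IsRefl) {x y : ℙ K V} :
    B.polarityGraph.Adj x y ↔ x ≠ y ∧ B x.rep y.rep = 0 := by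
  rw [polarityGraph, SimpleGraph.fromRel_adj, hrefl.eq_iff (x := y.rep), or_self]

variable [FiniteDimensional K V] (hB : B.Nondegenerate) (h3 : finrank K V = 3)
include hB h3

lemma submodule_eq_orthogonal_sup {x y z : ℙ K V} (hxz : x ≠ z)
    (hx : B x.rep y.rep = 0) (hz : B z.rep y.rep = 0) :
    y.submodule = B.orthogonal (x.submodule ⊔ z.submodule) := by
  have hsup : 1 < finrank K ↥(x.submodule ⊔ z.submodule) := by
    rw [← x.finrank_submodule]
    refine Submodule.finrank_lt_finrank_of_lt (left_lt_sup.2 fun hzx => hxz ?_)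
    exact submodule_injective
      (Submodule.eq_of_le_of_finrank_le hzx (by simp [finrank_submodule])).symm
  refine Submodule.eq_of_le_of_finrank_le ?_ ?_
  · rw [orthogonal_sup]
    exact le_inf ((B.apply_rep_eq_zero_iff).1 hx) ((B.apply_rep_eq_zero_iff).1 hz)
  · rw [finrank_orthogonal hB, h3, finrank_submodule]
    omega

theorem polarityGraph_c4Free (hrefl : B.IsRefl) : B.polarityGraph.C4Free := by
  intro a b c d hab hbc hcd hda
  rw [polarityGraph_adj hrefl] at hab hbc hcd hda
  refine or_iff_not_imp_left.2 fun hac => submodule_injective ?_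
  rw [submodule_eq_orthogonal_sup hB h3 hac hab.2 (hrefl _ _ hbc.2),
    submodule_eq_orthogonal_sup hB h3 hac (hrefl _ _ hda.2) hcd.2]

variable [Finite K]

lemma card_polar (x : ℙ K V) :
    Nat.card {y : ℙ K V // B x.rep y.rep = 0} = Nat.card K + 1 := by
  rw [← card_of_finrank_two K (B.orthogonal x.submodule), ← card_subtype_submodule_le]
  · exact Nat.card_congr (Equiv.subtypeEquivRight fun y => B.apply_rep_eq_zero_iff)
  · rw [finrank_orthogonal hB, h3, finrank_submodule]

variable [DecidableEq K] [Fintype (ℙ K V)] [DecidableRel B.polarityGraph.Adj]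

lemma polarityGraph_degree_add_ite (hrefl : B.IsRefl) (x : ℙ K V) :
    B.polarityGraph.degree x + (if B x.rep x.rep = 0 then 1 else 0) = Nat.card K + 1 := by
  classical
  have hN : B.polarityGraph.neighborFinset x = ({y | B x.rep y.rep = 0} : Finset _).erase x := by
    ext y
    simp [polarityGraph_adj hrefl, eq_comm]
  have hcard : #({y : ℙ K V | B x.rep y.rep = 0} : Finset _) = Nat.card K + 1 := by
    rw [← card_polar hB h3 x, Nat.card_eq_fintype_card, Fintype.card_subtype]
  rw [← SimpleGraph.card_neighborFinset_eq_degree, hN]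
  split_ifs with hx
  · rw [card_erase_of_mem (by simpa using hx), hcard]
    omega
  · rw [erase_eq_of_notMem (by simpa using hx), hcard]

lemma two_mul_card_edgeFinset_polarityGraph (hrefl : B.IsRefl) :
    2 * #B.polarityGraph.edgeFinset + Nat.card {x : ℙ K V // B x.rep x.rep = 0} =
      (Nat.card K ^ 2 + Nat.card K + 1) * (Nat.card K + 1) := by
  have hP : Fintype.card (ℙ K V) = Nat.card K ^ 2 + Nat.card K + 1 := by
    rw [← Nat.card_eq_fintype_card, card_of_finrank_three h3]
  rw [Nat.card_eq_fintype_card, Fintype.card_subtype, card_filter,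
    ← SimpleGraph.sum_degrees_eq_twice_card_edges, ← sum_add_distrib,
    sum_congr rfl fun x _ => polarityGraph_degree_add_ite hB h3 hrefl x, sum_const, card_univ,
    hP, smul_eq_mul]

lemma card_edgeFinset_polarityGraph_le (hrefl : B.IsRefl) (s : Set (ℙ K V))
    [DecidablePred (· ∈ s)] (hs : ∀ x ∉ s, B x.rep x.rep = 0) :
    #B.polarityGraph.edgeFinset ≤
      #(B.polarityGraph.induce s).edgeFinset + #sᶜ.toFinset * Nat.card K := by
  have hdeg : ∀ x ∈ sᶜ.toFinset, B.polarityGraph.degree x = Nat.card K := fun x hx => by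
    have := polarityGraph_degree_add_ite hB h3 hrefl x
    rw [if_pos (hs x (by simpa using hx))] at this
    omega
  have hdel := B.polarityGraph.card_edgeFinset_le_card_edgeFinset_induce_add_sum_degree s
  rwa [sum_congr rfl hdeg, sum_const, smul_eq_mul] at hdel

end LinearMap.BilinForm

section Conic

open Projectivization LinearMap.BilinForm

variable {K : Type*} [Field K]

variable (K) in
def conicForm : BilinForm K (Fin 3 → K) := Matrix.toBilin' !![0, 0, 1; 0, -2, 0; 1, 0, 0]

lemma conicForm_apply (x y : Fin 3 → K) :
    conicForm K x y = x 0 * y 2 - 2 * (x 1 * y 1) + x 2 * y 0 := by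
  simp [conicForm, Matrix.toBilin'_apply, Fin.sum_univ_three]
  ring

lemma conicForm_isRefl : (conicForm K).IsRefl := fun x y h => by
  rw [conicForm_apply] at h ⊢
  linear_combination h

lemma conicForm_nondegenerate (h2 : (2 : K) ≠ 0) : (conicForm K).Nondegenerate := by
  rw [conicForm, LinearMap.BilinForm.nondegenerate_toBilin'_iff_det_ne_zero]
  simpa [Matrix.det_fin_three] using h2

def conicPoint : Option K → ℙ K (Fin 3 → K)
  | none => mk K ![0, 0, 1] (by simp)
  | some t => mk K ![1, t, t ^ 2] (by simp)

lemma conicPoint_injective : Function.Injective (conicPoint (K := K)) := by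
  rintro (_ | s) (_ | t) h <;>
    simp [conicPoint, mk_eq_mk_iff', funext_iff, Fin.forall_fin_succ] at h ⊢
  exact h.1.symm

lemma range_conicPoint (h2 : (2 : K) ≠ 0) :
    Set.range conicPoint = {x : ℙ K (Fin 3 → K) | conicForm K x.rep x.rep = 0} := by
  ext x
  constructor
  · rintro ⟨_ | t, rfl⟩ <;>
      rw [conicPoint, Set.mem_ofPred_eq, apply_rep_mk_eq_zero_iff, conicForm_apply] <;> simp
    ring
  · induction x using ind with | h v hv =>
    rw [Set.mem_ofPred_eq, apply_rep_mk_eq_zero_iff, conicForm_apply]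
    intro hvv
    have hconic : v 0 * v 2 = v 1 ^ 2 := by
      apply mul_left_cancel₀ h2
      linear_combination hvv
    by_cases h0 : v 0 = 0
    · have h1 : v 1 = 0 := by simpa [h0] using hconic.symm
      have h2' : v 2 ≠ 0 := fun h2' => hv (by ext i; fin_cases i <;> simp [h0, h1, h2'])
      refine ⟨none, ((mk_eq_mk_iff' K _ _ _ _).2 ⟨v 2, ?_⟩).symm⟩
      ext i; fin_cases i <;> simp [h0, h1]
    · refine ⟨some (v 1 / v 0), ((mk_eq_mk_iff' K _ _ _ _).2 ⟨v 0, ?_⟩).symm⟩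
      ext i; fin_cases i <;> simp
      · field_simp
      · field_simp
        linear_combination -hconic

lemma card_isotropic_conicForm [Finite K] (h2 : (2 : K) ≠ 0) :
    Nat.card {x : ℙ K (Fin 3 → K) // conicForm K x.rep x.rep = 0} = Nat.card K + 1 := by
  rw [← Set.coe_ofPred, ← range_conicPoint h2, Nat.card_range_of_injective conicPoint_injective,
    Finite.card_option]

theorem exists_c4Free_card_edgeFinset [Finite K] (h2 : (2 : K) ≠ 0) {n : ℕ}
    (hn : n + 3 = Nat.card K ^ 2 + Nat.card K + 1) :
    ∃ (G : SimpleGraph (Fin n)) (_ : DecidableRel G.Adj), G.C4Free ∧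
      Nat.card K * (Nat.card K + 1) ^ 2 ≤ 2 * #G.edgeFinset + 6 * Nat.card K := by
  classical
  let _ : Fintype (ℙ K (Fin 3 → K)) := Fintype.ofFinite _
  have h3 : finrank K (Fin 3 → K) = 3 := Module.finrank_fin_fun K
  have hB := conicForm_nondegenerate h2
  let t : Finset (ℙ K (Fin 3 → K)) := image conicPoint {none, some 0, some 1}
  have ht : #t = 3 := by
    rw [card_image_of_injective _ conicPoint_injective]
    simp
  let s : Set (ℙ K (Fin 3 → K)) := (↑t)ᶜ
  have hs : Fintype.card s = n := by
    rw [← Nat.card_eq_fintype_card, Nat.card_coe_set_eq, Set.ncard_compl, Set.ncard_coe_finset, ht,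
      card_of_finrank_three h3]
    omega
  let e : Fin n ≃ s := (Fintype.equivFinOfCardEq hs).symm
  refine ⟨((conicForm K).polarityGraph.induce s).comap e, inferInstance, ?_, ?_⟩
  · exact ((polarityGraph_c4Free hB h3 conicForm_isRefl).comap Subtype.val_injective).comap
      e.injective
  · rw [(SimpleGraph.Iso.comap e _).card_edgeFinset_eq]
    have hdel := card_edgeFinset_polarityGraph_le hB h3 conicForm_isRefl s fun x hx => by
      obtain ⟨o, -, rfl⟩ := mem_image.1 (not_not.1 hx)
      exact (range_conicPoint h2).subset ⟨o, rfl⟩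
    rw [show sᶜ.toFinset = t by simp [s], ht] at hdel
    have hE := two_mul_card_edgeFinset_polarityGraph hB h3 conicForm_isRefl
    rw [card_isotropic_conicForm h2] at hE
    nlinarith

end Conic

theorem ex_C4_mersenne_general (q : ℕ) (hq5 : 5 ≤ q)
    (hprime : Nat.Prime (q - 1)) :
    (∃ (G : SimpleGraph (Fin (q ^ 2 - q - 2))) (_ : DecidableRel G.Adj),
      (∀ a b c d, G.Adj a b → G.Adj b c → G.Adj c d → G.Adj d a → a = c ∨ b = d) ∧
      (G.edgeFinset.card : ℝ) ≥
        (1 / 2) * (q : ℝ) ^ 3 - (1 / 2) * (q : ℝ) ^ 2 - 3 * q + 3) ∧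
    (1 / 2) * (q : ℝ) ^ 3 - (1 / 2) * (q : ℝ) ^ 2 - 3 * q + 3 >
      (1 / 2) * (q : ℝ) ^ 3 - (q : ℝ) ^ 2 := by
  obtain ⟨p, rfl⟩ : ∃ p, q = p + 1 := ⟨q - 1, by omega⟩
  rw [Nat.add_sub_cancel] at hprime
  have := Fact.mk hprime
  have h2 : (2 : ZMod p) ≠ 0 := Ring.two_ne_zero (by rw [ZMod.ringChar_zmod_n]; omega)
  have hn : (p + 1) ^ 2 - (p + 1) - 2 + 3 = Nat.card (ZMod p) ^ 2 + Nat.card (ZMod p) + 1 := by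
    rw [Nat.card_zmod, add_sq]
    omega
  obtain ⟨G, hG, hC4, hE⟩ := exists_c4Free_card_edgeFinset h2 hn
  rw [Nat.card_zmod] at hE
  have hE' : (p : ℝ) * (p + 1) ^ 2 ≤ 2 * #G.edgeFinset + 6 * p := by exact_mod_cast hE
  have hp : (4 : ℝ) ≤ p := by exact_mod_cast (by omega : 4 ≤ p)
  refine ⟨⟨G, hG, hC4, ?_⟩, ?_⟩ <;> push_cast <;> nlinarith

/-- If `q = 2^k` and `q - 1` is a (Mersenne) prime with `q ≥ 5`, then there is a `C₄`-free
graph on `q² - q - 2` vertices with at least `(1/2)q³ - (1/2)q² - 3q + 3` edges, i.e.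
`ex(q² - q - 2, C₄) ≥ (1/2)q³ - (1/2)q² - 3q + 3`; moreover this bound is strictly greater
than `(1/2)q³ - q²`. -/
theorem ex_C4_mersenne (q : ℕ) (hq5 : 5 ≤ q) (hq2 : ∃ k : ℕ, q = 2 ^ k)
    (hprime : Nat.Prime (q - 1)) :
    (∃ (G : SimpleGraph (Fin (q ^ 2 - q - 2))) (_ : DecidableRel G.Adj),
      (∀ a b c d, G.Adj a b → G.Adj b c → G.Adj c d → G.Adj d a → a = c ∨ b = d) ∧
      (G.edgeFinset.card : ℝ) ≥
        (1 / 2) * (q : ℝ) ^ 3 - (1 / 2) * (q : ℝ) ^ 2 - 3 * q + 3) ∧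
    (1 / 2) * (q : ℝ) ^ 3 - (1 / 2) * (q : ℝ) ^ 2 - 3 * q + 3 >
      (1 / 2) * (q : ℝ) ^ 3 - (q : ℝ) ^ 2 :=
  ex_C4_mersenne_general q hq5 hprime
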